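/- arXiv:1110.5619 — 6 statements merged into one kernel-verified Lean document; each statement's English description precedes it below -/
import Mathlib

section
/- Let V be a real vector space and K₁, K₂ ⊆ V nonempty disjoint convex sets. Then there exist a real closed extension field R of ℝ, an ℝ-linear functional φ : V → R, and an element γ ∈ R with γ > 0, such that φ(x) + γ ≤ φ(y) for all x ∈ K₁ and all y ∈ K₂. -/
/-!
For each finite set `F`, Hahn–Banach in the finite-dimensional span of `F ∩ (K₂ - K₁)` gives a real
functional `L F` that is `≥ 1` there. Along an ultrafilter on `Finset V` refining `atTop`, the germ
of `F ↦ L F v` is additive and `ℝ`-homogeneous with values in the ultrapower `ℝ^U`, and it is `≥ 1`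
on all of `K₂ - K₁`, since every `z` eventually lies in `F`. The ultrapower of a real closed field is
real closed: square roots and roots of odd-degree polynomials can be chosen coordinatewise.
-/

/-- A linearly ordered field is *real closed* if every nonnegative element is a square and
every polynomial of odd degree has a root. -/
def IsRealClosed' (R : Type*) [Field R] [LinearOrder R] [IsStrictOrderedRing R] : Prop :=
  (∀ x : R, 0 ≤ x → ∃ y : R, y ^ 2 = x) ∧
    ∀ p : Polynomial R, Odd p.natDegree → ∃ x : R, p.IsRoot x

universe u

open Filter Polynomial Pointwise

theorem Polynomial.tendsto_atBot_atBot_of_odd_natDegree {p : ℝ[X]} (hp : Odd p.natDegree)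
    (hlc : 0 < p.leadingCoeff) : Tendsto (fun x => p.eval x) atBot atBot := by
  have hdeg : 0 < (p.comp (-X)).degree := by
    rw [← natDegree_pos_iff_degree_pos, natDegree_comp]; simpa using hp.pos
  have hlc' : (p.comp (-X)).leadingCoeff ≤ 0 := by
    rw [leadingCoeff_comp (by simp)]; simp [hp.neg_one_pow, hlc.le]
  simpa [Function.comp_def] using
    (tendsto_atBot_of_leadingCoeff_nonpos _ hdeg hlc').comp tendsto_neg_atBot_atTop

theorem Polynomial.exists_isRoot_of_odd_natDegree_real {p : ℝ[X]} (hp : Odd p.natDegree) :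
    ∃ x, p.IsRoot x := by
  wlog hlc : 0 < p.leadingCoeff generalizing p
  · have hp0 : p ≠ 0 := by rintro rfl; simp at hp
    obtain ⟨x, hx⟩ := this (p := -p) (by rwa [natDegree_neg]) <| by
      rw [leadingCoeff_neg, neg_pos]
      exact (not_lt.1 hlc).lt_of_ne (leadingCoeff_ne_zero.2 hp0)
    exact ⟨x, by simpa using hx⟩
  have h_top := p.tendsto_atTop_of_leadingCoeff_nonneg
    (natDegree_pos_iff_degree_pos.1 hp.pos) hlc.le
  exact p.continuous.surjective h_top (tendsto_atBot_atBot_of_odd_natDegree hp hlc) 0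

theorem isRealClosed'_real : IsRealClosed' ℝ :=
  ⟨fun x hx => ⟨√x, Real.sq_sqrt hx⟩, fun _ hp => exists_isRoot_of_odd_natDegree_real hp⟩

section Ultrapower

variable {α K : Type*} [Field K] [LinearOrder K] [IsStrictOrderedRing K]

theorem IsRealClosed'.germ (hK : IsRealClosed' K) (U : Ultrafilter α) :
    IsRealClosed' (Germ (U : Filter α) K) := by
  refine ⟨fun x hx => ?_, fun p hp => ?_⟩
  · induction x using Germ.inductionOn with | h f => ?_
    choose s hs using fun a => hK.1 (max (f a) 0) (le_max_right _ _)
    refine ⟨s, ?_⟩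
    rw [← Germ.coe_pow, Germ.coe_eq]
    filter_upwards [Germ.coe_nonneg.1 hx] with a ha
    simp [hs, ha]
  · have hp0 : p ≠ 0 := by rintro rfl; simp at hp
    -- a monic lift has coordinate polynomials of the same odd degree at every index
    obtain ⟨P, hPp, hPdeg, hPmonic⟩ := lifts_and_natDegree_eq_and_monic
      (map_surjective (Germ.coeRingHom (U : Filter α)) Quot.mk_surjective _)
      (monic_mul_leadingCoeff_inv hp0)
    have hdeg : ∀ a, Odd (P.map (Pi.evalRingHom (fun _ => K) a)).natDegree := fun a => by
      rwa [hPmonic.natDegree_map, hPdeg, natDegree_mul_C (inv_ne_zero (leadingCoeff_ne_zero.2 hp0))]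
    choose r hr using fun a => hK.2 _ (hdeg a)
    refine ⟨r, ?_⟩
    have hPr : P.eval r = 0 := funext fun a =>
      (eval₂_hom (Pi.evalRingHom _ a) r).symm.trans ((eval_map _ _).symm.trans (hr a).eq_zero)
    have hpr := congrArg (eval (Germ.coeRingHom (U : Filter α) r)) hPp
    rw [eval_map, eval₂_hom, hPr, map_zero, eval_mul, eval_C, eq_comm, mul_eq_zero] at hpr
    exact hpr.resolve_right (inv_ne_zero (leadingCoeff_ne_zero.2 hp0))

end Ultrapower

theorem exists_strongDual_one_le_of_zero_notMem_convexHull {E : Type*} [TopologicalSpace E]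
    [AddCommGroup E] [Module ℝ E] [IsTopologicalAddGroup E] [ContinuousSMul ℝ E]
    [LocallyConvexSpace ℝ E] [T2Space E] {S : Set E} (hS : S.Finite)
    (h0 : (0 : E) ∉ convexHull ℝ S) : ∃ f : StrongDual ℝ E, ∀ z ∈ S, 1 ≤ f z := by
  obtain ⟨f, u, hu, hf⟩ := geometric_hahn_banach_point_closed (convex_convexHull ℝ S)
    (hS.isCompact_convexHull ℝ).isClosed h0
  rw [map_zero] at hu
  refine ⟨u⁻¹ • f, fun z hz => ?_⟩
  rw [smul_apply, smul_eq_mul, le_inv_mul_iff₀ hu, mul_one]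
  exact (hf z (subset_convexHull ℝ S hz)).le

theorem exists_linearMap_one_le_of_zero_notMem_convexHull {V : Type*} [AddCommGroup V]
    [Module ℝ V] {S : Set V} (hS : S.Finite) (h0 : (0 : V) ∉ convexHull ℝ S) :
    ∃ L : V →ₗ[ℝ] ℝ, ∀ z ∈ S, 1 ≤ L z := by
  let W := Submodule.span ℝ S
  have : FiniteDimensional ℝ W := FiniteDimensional.span_of_finite ℝ hS
  let j : (Fin (Module.finrank ℝ W) → ℝ) →ₗ[ℝ] V :=
    W.subtype ∘ₗ (Module.finBasis ℝ W).equivFun.symm.toLinearMap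
  have hj : Function.Injective j :=
    W.injective_subtype.comp (Module.finBasis ℝ W).equivFun.symm.injective
  have hSj : S ⊆ Set.range j := fun z hz =>
    ⟨(Module.finBasis ℝ W).equivFun ⟨z, Submodule.subset_span hz⟩, by simp [j]⟩
  have h0' : (0 : Fin _ → ℝ) ∉ convexHull ℝ (j ⁻¹' S) := fun h => h0 <| by
    have hj0 := Set.mem_image_of_mem j h
    rwa [j.image_convexHull, Set.image_preimage_eq_of_subset hSj, map_zero] at hj0
  obtain ⟨f, hf⟩ := exists_strongDual_one_le_of_zero_notMem_convexHull (hS.preimage hj.injOn) h0'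
  obtain ⟨g, hg⟩ := j.exists_leftInverse_of_injective (LinearMap.ker_eq_bot.2 hj)
  refine ⟨f.toLinearMap ∘ₗ g, fun z hz => ?_⟩
  obtain ⟨x, rfl⟩ := hSj hz
  simpa [← LinearMap.comp_apply g j, hg] using hf x hz

theorem real_closed_separation_of_convex_sets_general {V : Type u} [AddCommGroup V] [Module ℝ V]
    (K₁ K₂ : Set V)
    (hdisj : K₁ ∩ K₂ = ∅) (hconv₁ : Convex ℝ K₁) (hconv₂ : Convex ℝ K₂) :
    ∃ (R : Type u) (_ : Field R) (_ : LinearOrder R) (_ : IsStrictOrderedRing R) (f : ℝ →+*o R) (φ : V → R) (γ : R),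
      IsRealClosed' R ∧
      (∀ v w : V, φ (v + w) = φ v + φ w) ∧
      (∀ (r : ℝ) (v : V), φ (r • v) = f r * φ v) ∧
      0 < γ ∧
      (∀ x ∈ K₁, ∀ y ∈ K₂, φ x + γ ≤ φ y) := by
  have h0 : (0 : V) ∉ K₂ - K₁ := by
    rintro ⟨y, hy, x, hx, hxy⟩
    rw [sub_eq_zero] at hxy
    exact (Set.eq_empty_iff_forall_notMem.1 hdisj) x ⟨hx, hxy ▸ hy⟩
  choose L hL using fun F : Finset V =>
    exists_linearMap_one_le_of_zero_notMem_convexHull (S := ↑F ∩ (K₂ - K₁))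
      (F.finite_toSet.subset Set.inter_subset_left)
      fun h => h0 (convexHull_min Set.inter_subset_right (hconv₂.sub hconv₁) h)
  let U : Ultrafilter (Finset V) := .of atTop
  refine ⟨Germ (U : Filter (Finset V)) ℝ, inferInstance, inferInstance, inferInstance,
    ⟨(Germ.coeRingHom _).comp (Pi.constRingHom _ ℝ), fun _ _ => Germ.const_le⟩,
    fun v => ((fun F => L F v : Finset V → ℝ) : Germ _ ℝ), 1, isRealClosed'_real.germ U,
    fun v w => ?_, fun r v => ?_, one_pos, fun x hx y hy => ?_⟩
  · simp_rw [map_add]; rfl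
  · simp_rw [map_smul, smul_eq_mul]; rfl
  · rw [← Germ.coe_one, ← Germ.coe_add, Germ.coe_le]
    filter_upwards [Ultrafilter.of_le atTop (eventually_ge_atTop {y - x})] with F hF
    have hLF := hL F (y - x) ⟨hF (Finset.mem_singleton_self _), Set.sub_mem_sub hy hx⟩
    rw [map_sub] at hLF
    simp only [Pi.add_apply, Pi.one_apply]
    linarith

/-- **Separation of two disjoint convex sets over a real closed extension field.**
For nonempty disjoint convex sets `K₁, K₂` in a real vector space `V` there are a real
closed extension field `R` of `ℝ`, an `ℝ`-linear functional `φ : V → R` and `γ ∈ R`,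
`γ > 0`, with `φ x + γ ≤ φ y` for all `x ∈ K₁`, `y ∈ K₂`. -/
theorem real_closed_separation_of_convex_sets {V : Type u} [AddCommGroup V] [Module ℝ V]
    (K₁ K₂ : Set V) (h₁ : K₁.Nonempty) (h₂ : K₂.Nonempty)
    (hdisj : K₁ ∩ K₂ = ∅) (hconv₁ : Convex ℝ K₁) (hconv₂ : Convex ℝ K₂) :
    ∃ (R : Type u) (_ : Field R) (_ : LinearOrder R) (_ : IsStrictOrderedRing R) (f : ℝ →+*o R) (φ : V → R) (γ : R),
      IsRealClosed' R ∧
      (∀ v w : V, φ (v + w) = φ v + φ w) ∧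
      (∀ (r : ℝ) (v : V), φ (r • v) = f r * φ v) ∧
      0 < γ ∧
      (∀ x ∈ K₁, ∀ y ∈ K₂, φ x + γ ≤ φ y) :=
  real_closed_separation_of_convex_sets_general K₁ K₂ hdisj hconv₁ hconv₂
end

section
/- Let V be a real vector space, C ⊆ V a convex cone, and H ⊆ V a linear subspace with (C + H) ∩ (−(C + H)) = H. Let R be a real closed extension field of ℝ and φ : H → R an ℝ-linear functional with φ(y) ≥ 0 for all y ∈ C ∩ H. Then there exist a real closed extension field R' of R (with ordered-field embeddings ℝ → R → R') and an ℝ-linear functional φ̄ : V → R' such that φ̄(h) equals the image of φ(h) in R' for all h ∈ H, φ̄(y) ≥ 0 for all y ∈ C, and moreover φ̄(y) > 0 for all y ∈ C \ H. -/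
open scoped Pointwise

universe u v

/-!
For a finite set `S ⊆ V`, the images in `V ⧸ H` of the points of `S ∩ (C \ H)` have a convex
hull avoiding `0`, because the hypothesis on `C + H` makes `(C + H) \ H` convex.  Separating `0`
from that hull gives a real functional `L` vanishing on `H` and positive on `S ∩ (C \ H)`, and
`φ ∘ π + r · L`, with `π` a projection onto `H` and `r ∈ R` large, extends `φ` and is positive on
`S ∩ (C \ H)`.  The ultrapower of `R` along an ultrafilter on the finite subsets of `V` that
refines `atTop` glues these extensions into one functional positive on all of `C \ H`; it is
real closed because real closedness passes to ultrapowers coordinatewise.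
-/

open Filter Set

section Cone

variable {V : Type*} [AddCommGroup V] [Module ℝ V]

theorem add_mem_of_convex_of_smul_mem {K : Set V} (hconv : Convex ℝ K)
    (hcone : ∀ y ∈ K, ∀ r : ℝ, 0 < r → r • y ∈ K) {a b : V} (ha : a ∈ K) (hb : b ∈ K) :
    a + b ∈ K := by
  have hmid := hconv ha hb (by norm_num : (0 : ℝ) ≤ 1 / 2) (by norm_num : (0 : ℝ) ≤ 1 / 2)
    (by norm_num)
  simpa [smul_add, smul_smul] using hcone _ hmid 2 two_pos

theorem convex_diff_of_inter_neg_eq {K : Set V} {H : Submodule ℝ V} (hconv : Convex ℝ K)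
    (hcone : ∀ y ∈ K, ∀ r : ℝ, 0 < r → r • y ∈ K) (hK : K ∩ -K = H) :
    Convex ℝ (K \ H) := by
  rintro a ⟨haK, haH⟩ b ⟨hbK, hbH⟩ s t hs ht hst
  refine ⟨hconv haK hbK hs ht hst, fun hmem => ?_⟩
  rcases hs.eq_or_lt with rfl | hs
  · rw [zero_add] at hst
    exact hbH (by simpa [hst] using hmem)
  rcases ht.eq_or_lt with rfl | ht
  · rw [add_zero] at hst
    exact haH (by simpa [hst] using hmem)
  have hneg : -(t • b) = s • a + -(s • a + t • b) := by abel
  have hHK : (H : Set V) ⊆ K := hK ▸ inter_subset_left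
  have htb : t • b ∈ K ∩ -K := ⟨hcone b hbK t ht, by
    rw [Set.mem_neg, hneg]
    exact add_mem_of_convex_of_smul_mem hconv hcone (hcone a haK s hs) (hHK (H.neg_mem hmem))⟩
  rw [hK] at htb
  exact hbH ((H.smul_mem_iff ht.ne').mp htb)

end Cone

theorem exists_linearMap_pos_of_zero_notMem_convexHull {Q : Type*} [AddCommGroup Q]
    [Module ℝ Q] {G : Set Q} (hG : G.Finite) (h0 : (0 : Q) ∉ convexHull ℝ G) :
    ∃ L : Q →ₗ[ℝ] ℝ, ∀ x ∈ G, 0 < L x := by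
  -- `Q` has no topology, so separate in `Fin n → ℝ` after a linear map injective on `span G`.
  let E := Submodule.span ℝ G
  have : FiniteDimensional ℝ E := FiniteDimensional.span_of_finite ℝ hG
  let e := (Module.finBasis ℝ E).equivFun
  obtain ⟨P, hP⟩ := LinearMap.exists_extend e.toLinearMap
  have hP0 : (0 : Fin _ → ℝ) ∉ convexHull ℝ (P '' G) := by
    rw [← P.image_convexHull]
    rintro ⟨z, hz, hPz⟩
    have hzE : z ∈ E := convexHull_min Submodule.subset_span E.convex hz
    have hez : e ⟨z, hzE⟩ = 0 := (LinearMap.congr_fun hP ⟨z, hzE⟩).symm.trans hPz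
    rw [LinearEquiv.map_eq_zero_iff, Submodule.mk_eq_zero] at hez
    exact h0 (hez ▸ hz)
  obtain ⟨F, u, hu, hFu⟩ := geometric_hahn_banach_point_closed (convex_convexHull ℝ _)
    ((hG.image P).isCompact_convexHull ℝ).isClosed hP0
  refine ⟨F.toLinearMap ∘ₗ P, fun x hx => ?_⟩
  rw [map_zero] at hu
  exact hu.trans (hFu _ (subset_convexHull ℝ _ (mem_image_of_mem P hx)))

theorem Set.Finite.exists_pos_add_mul {ι K : Type*} [Field K] [LinearOrder K]
    [IsStrictOrderedRing K] {s : Set ι} (hs : s.Finite) (a b : ι → K)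
    (hb : ∀ i ∈ s, 0 < b i) : ∃ r : K, ∀ i ∈ s, 0 < a i + r * b i := by
  obtain ⟨M, hM⟩ := (hs.image fun i => -a i / b i).bddAbove
  refine ⟨M + 1, fun i hi => ?_⟩
  have hle : -a i ≤ M * b i := (div_le_iff₀ (hb i hi)).mp (hM (mem_image_of_mem _ hi))
  linarith [hb i hi]

section Extension

variable {V : Type*} [AddCommGroup V] [Module ℝ V] {C : Set V} {H : Submodule ℝ V}

theorem zero_notMem_convexHull_image_mkQ (hconv : Convex ℝ C)
    (hcone : ∀ y ∈ C, ∀ r : ℝ, 0 < r → r • y ∈ C)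
    (hCH : (C + (H : Set V)) ∩ (-(C + (H : Set V))) = (H : Set V)) {T : Set V}
    (hT : T ⊆ C \ H) : (0 : V ⧸ H) ∉ convexHull ℝ (H.mkQ '' T) := by
  have hcone' : ∀ y ∈ C + (H : Set V), ∀ r : ℝ, 0 < r → r • y ∈ C + (H : Set V) := by
    rintro _ ⟨c, hc, h, hh, rfl⟩ r hr
    exact ⟨r • c, hcone c hc r hr, r • h, H.smul_mem r hh, (smul_add r c h).symm⟩
  have hhull : convexHull ℝ T ⊆ (C + (H : Set V)) \ H :=
    convexHull_min (hT.trans (sdiff_subset_sdiff_left (subset_add_left C H.zero_mem)))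
      (convex_diff_of_inter_neg_eq (hconv.add H.convex) hcone' hCH)
  rw [← LinearMap.image_convexHull]
  rintro ⟨z, hz, hz0⟩
  exact (hhull hz).2 ((Submodule.Quotient.mk_eq_zero H).mp hz0)

theorem exists_linearMap_pos_on_diff (hconv : Convex ℝ C)
    (hcone : ∀ y ∈ C, ∀ r : ℝ, 0 < r → r • y ∈ C)
    (hCH : (C + (H : Set V)) ∩ (-(C + (H : Set V))) = (H : Set V)) {T : Set V}
    (hT : T.Finite) (hTC : T ⊆ C \ H) :
    ∃ L : V →ₗ[ℝ] ℝ, (∀ h ∈ H, L h = 0) ∧ ∀ y ∈ T, 0 < L y := by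
  obtain ⟨L, hL⟩ := exists_linearMap_pos_of_zero_notMem_convexHull (hT.image H.mkQ)
    (zero_notMem_convexHull_image_mkQ hconv hcone hCH hTC)
  refine ⟨L ∘ₗ H.mkQ, fun h hh => ?_, fun y hy => hL _ (mem_image_of_mem _ hy)⟩
  rw [LinearMap.comp_apply, Submodule.mkQ_apply, (Submodule.Quotient.mk_eq_zero H).mpr hh,
    map_zero]

theorem exists_extension_pos_on_finset (hconv : Convex ℝ C)
    (hcone : ∀ y ∈ C, ∀ r : ℝ, 0 < r → r • y ∈ C)
    (hCH : (C + (H : Set V)) ∩ (-(C + (H : Set V))) = (H : Set V))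
    {R : Type*} [Field R] [LinearOrder R] [IsStrictOrderedRing R] (f : ℝ →+*o R) (φ : H → R)
    (hadd : ∀ a b : H, φ (a + b) = φ a + φ b)
    (hsmul : ∀ (r : ℝ) (a : H), φ (r • a) = f r * φ a) (S : Finset V) :
    ∃ ψ : V → R,
      (∀ v w : V, ψ (v + w) = ψ v + ψ w) ∧
      (∀ (r : ℝ) (v : V), ψ (r • v) = f r * ψ v) ∧
      (∀ h : H, ψ h = φ h) ∧
      (∀ y ∈ S, y ∈ C → y ∉ H → 0 < ψ y) := by
  obtain ⟨L, hLH, hL⟩ :=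
    exists_linearMap_pos_on_diff hconv hcone hCH (S.finite_toSet.inter_of_left _) inter_subset_right
  obtain ⟨π, hπ⟩ := LinearMap.exists_leftInverse_of_injective H.subtype H.ker_subtype
  have hfL : ∀ y ∈ (S : Set V) ∩ (C \ H), 0 < f (L y) := fun y hy => by
    simpa using (f : ℝ →o R).monotone.strictMono_of_injective f.toRingHom.injective (hL y hy)
  obtain ⟨r, hr⟩ := (S.finite_toSet.inter_of_left (C \ H)).exists_pos_add_mul
    (fun y => φ (π y)) (fun y => f (L y)) hfL
  refine ⟨fun v => φ (π v) + r * f (L v), fun v w => ?_, fun c v => ?_, fun h => ?_,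
    fun y hyS hyC hyH => hr y ⟨hyS, hyC, hyH⟩⟩
  · simp only [map_add, hadd]
    ring
  · simp only [map_smul, hsmul, smul_eq_mul, map_mul]
    ring
  · simp only [hLH h h.2, map_zero, mul_zero, add_zero]
    exact congrArg φ (LinearMap.congr_fun hπ h)

end Extension

namespace Filter.Germ

open Polynomial

variable {α R : Type*}

def constOrderRingHom [Semiring R] [Preorder R] (l : Filter α) : R →+*o Germ l R where
  toFun := (↑)
  map_one' := rfl
  map_mul' _ _ := rfl
  map_zero' := rfl
  map_add' _ _ := rfl
  monotone' _ _ := const_le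

variable [Field R] [LinearOrder R] [IsStrictOrderedRing R] {U : Ultrafilter α}

theorem exists_sq_eq_of_nonneg (hsq : ∀ x : R, 0 ≤ x → ∃ y, y ^ 2 = x)
    {x : Germ (U : Filter α) R} (hx : 0 ≤ x) : ∃ y, y ^ 2 = x := by
  induction x using Germ.inductionOn with | h u => ?_
  choose s hs using fun i => hsq |u i| (abs_nonneg _)
  refine ⟨s, ?_⟩
  rw [← coe_pow]
  exact coe_eq.mpr ((coe_le.mp hx).mono fun i hi => by simp [hs, abs_of_nonneg hi])

theorem exists_isRoot_of_odd_natDegree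
    (hodd : ∀ p : R[X], Odd p.natDegree → ∃ x, p.IsRoot x)
    {p : (Germ (U : Filter α) R)[X]} (hp : Odd p.natDegree) : ∃ x, p.IsRoot x := by
  have hp0 : p ≠ 0 := by rintro rfl; simp at hp
  -- Lifting a monic multiple of `p` to a monic polynomial over `α → R` keeps the degree odd
  -- in every coordinate, so a root can be chosen coordinatewise.
  obtain ⟨P, hPp, hPdeg, hPmonic⟩ := lifts_and_natDegree_eq_and_monic
    (mem_lifts_of_surjective (f := coeRingHom (U : Filter α))
      (fun x => x.inductionOn fun u => ⟨u, rfl⟩) _) (monic_mul_leadingCoeff_inv hp0)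
  have hPi : ∀ i, Odd (P.map (Pi.evalRingHom (fun _ => R) i)).natDegree := fun i => by
    rwa [hPmonic.natDegree_map, hPdeg, natDegree_mul_leadingCoeff_inv _ hp0]
  choose x hx using fun i => hodd _ (hPi i)
  have hPx : P.eval x = 0 := funext fun i => by
    have := hx i
    rwa [IsRoot, eval_map, show x i = Pi.evalRingHom _ i x from rfl, eval₂_at_apply] at this
  refine ⟨x, ?_⟩
  have hroot : (p * C p.leadingCoeff⁻¹).IsRoot x := by
    rw [← hPp, IsRoot, eval_map, show (x : Germ (U : Filter α) R) = coeRingHom _ x from rfl,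
      eval₂_at_apply, hPx, map_zero]
  simpa [root_mul, hp0] using hroot

theorem isRealClosed' (hR : IsRealClosed' R) : IsRealClosed' (Germ (U : Filter α) R) :=
  ⟨fun _ hx => exists_sq_eq_of_nonneg hR.1 hx, fun _ hp => exists_isRoot_of_odd_natDegree hR.2 hp⟩

end Filter.Germ

/-- **Extension theorem for positive functionals.** Let `C` be a convex cone in a real vector
space `V` and `H ⊆ V` a subspace with `(C + H) ∩ (-(C + H)) = H`.  Every `ℝ`-linear
functional `φ : H → R` (with `R` a real closed extension field of `ℝ`) which is nonnegative
on `C ∩ H` extends to an `ℝ`-linear functional `φ̄ : V → R'`, for some real closed extension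
field `R'` of `R`, which is nonnegative on `C` and strictly positive on `C \ H`. -/
theorem real_closed_extension_of_positive_functional
    {V : Type u} [AddCommGroup V] [Module ℝ V]
    (C : Set V) (hCconv : Convex ℝ C)
    (hCcone : ∀ y ∈ C, ∀ r : ℝ, 0 < r → r • y ∈ C)
    (H : Submodule ℝ V)
    (hCH : (C + (H : Set V)) ∩ (-(C + (H : Set V))) = (H : Set V))
    (R : Type v) [Field R] [LinearOrder R] [IsStrictOrderedRing R] (f : ℝ →+*o R) (hR : IsRealClosed' R)
    (φ : H → R)
    (hadd : ∀ a b : H, φ (a + b) = φ a + φ b)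
    (hsmul : ∀ (r : ℝ) (a : H), φ (r • a) = f r * φ a)
    (hpos : ∀ a : H, (a : V) ∈ C → 0 ≤ φ a) :
    ∃ (R' : Type (max u v)) (_ : Field R') (_ : LinearOrder R') (_ : IsStrictOrderedRing R') (g : R →+*o R') (φbar : V → R'),
      IsRealClosed' R' ∧
      (∀ v w : V, φbar (v + w) = φbar v + φbar w) ∧
      (∀ (r : ℝ) (v : V), φbar (r • v) = g (f r) * φbar v) ∧
      (∀ h : H, φbar (h : V) = g (φ h)) ∧
      (∀ y ∈ C, 0 ≤ φbar y) ∧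
      (∀ y ∈ C, y ∉ (H : Set V) → 0 < φbar y) := by
  choose ψ hψadd hψsmul hψext hψpos using
    exists_extension_pos_on_finset hCconv hCcone hCH f φ hadd hsmul
  let U : Ultrafilter (Finset V) := .of atTop
  let g := Germ.constOrderRingHom (R := R) (U : Filter (Finset V))
  let φbar (v : V) : Germ (U : Filter (Finset V)) R := Germ.ofFun fun S => ψ S v
  have hmem : ∀ y : V, ∀ᶠ S in (U : Filter (Finset V)), y ∈ S := fun y =>
    Ultrafilter.of_le atTop
      ((eventually_ge_atTop {y}).mono fun _ hS => hS (Finset.mem_singleton_self y))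
  have hext : ∀ h : H, φbar h = g (φ h) := fun h => by simp only [φbar, hψext]; rfl
  have hposC : ∀ y ∈ C, y ∉ (H : Set V) → 0 < φbar y := fun y hy hyH =>
    Germ.coe_pos.mpr ((hmem y).mono fun S hS => hψpos S y hS hy hyH)
  refine ⟨Germ (U : Filter (Finset V)) R, inferInstance, inferInstance, inferInstance, g, φbar,
    Germ.isRealClosed' hR, fun v w => ?_, fun r v => ?_, hext, fun y hy => ?_, hposC⟩
  · simp only [φbar, hψadd]; rfl
  · simp only [φbar, hψsmul]; rfl
  · by_cases hyH : y ∈ H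
    · lift y to H using hyH
      rw [hext]
      exact map_nonneg g (hpos y hy)
    · exact (hposC y hy hyH).le
end

section
/- Let R be a real closed extension field of ℝ containing an element ε with 0 < ε < r for every real number r > 0. Define the ℝ-linear functional ψ : ℝ[t] → R by ψ(p) := p(0) + ε·p''(0). Then ψ(p) ≥ 0 for every polynomial p ∈ ℝ[t] with p(x) ≥ 0 for all x ∈ ℝ, but ψ fails the Cauchy–Schwarz inequality: for a = 1 + t² one has ψ(a)² > ψ(a²)·ψ(1); indeed ψ(a)² = 1 + 4ε + 4ε² while ψ(a²)·ψ(1) = 1 + 4ε. -/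
open Polynomial

/-- The functional `ψ(p) = p(0) + ε·p''(0)` on `ℝ[t]`, with values in an extension field
`R` of `ℝ` (via `f : ℝ →+*o R`) and with `ε ∈ R`. -/
noncomputable def psi {R : Type*} [Field R] [LinearOrder R] [IsStrictOrderedRing R] (f : ℝ →+*o R) (ε : R)
    (p : Polynomial ℝ) : R :=
  f (p.eval 0) + ε * f ((derivative (derivative p)).eval 0)

/-!
A polynomial that is nonnegative on `ℝ` and vanishes at `0` has a root of even multiplicity
there, so `p''(0) ≥ 0`; then both terms of `ψ(p)` are nonnegative. Otherwise `p(0) > 0`, and since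
`ε` lies below every positive real, `ε · |p''(0)| ≤ p(0)`. For `a = 1 + t²` the value `ψ(a) = 1 + 2ε`
carries the term `4ε²` in its square that `ψ(a²) = 1 + 4ε` lacks.
-/

namespace Polynomial

lemma eval_nonneg_of_mem_closure {p : ℝ[X]} {s : Set ℝ} {a : ℝ} (ha : a ∈ closure s)
    (hs : ∀ x ∈ s, 0 ≤ p.eval x) : 0 ≤ p.eval a :=
  closure_minimal hs (isClosed_le continuous_const p.continuous) ha

lemma eval_derivative_derivative_nonneg_of_eval_eq_zero {p : ℝ[X]} {a : ℝ}
    (hp : ∀ x, 0 ≤ p.eval x) (ha : p.eval a = 0) :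
    0 ≤ (derivative (derivative p)).eval a := by
  obtain ⟨q, rfl⟩ := dvd_iff_isRoot.2 ha
  have hq : q.eval a = 0 := by
    have hle : 0 ≤ (-q).eval a :=
      eval_nonneg_of_mem_closure (s := Set.Iio a) (by simp) fun x (hx : x < a) => by
        have := hp x
        simp only [eval_mul, eval_sub, eval_X, eval_C, eval_neg] at this ⊢
        nlinarith
    have hge : 0 ≤ q.eval a :=
      eval_nonneg_of_mem_closure (s := Set.Ioi a) (by simp) fun x (hx : a < x) => by
        have := hp x
        simp only [eval_mul, eval_sub, eval_X, eval_C] at this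
        nlinarith
    rw [eval_neg] at hle
    exact le_antisymm (by linarith) hge
  obtain ⟨r, rfl⟩ := dvd_iff_isRoot.2 hq
  have hr : 0 ≤ r.eval a :=
    eval_nonneg_of_mem_closure (s := {a}ᶜ) (by simp) fun x (hx : x ≠ a) => by
      have := hp x
      simp only [eval_mul, eval_sub, eval_X, eval_C] at this
      have : 0 < (x - a) * (x - a) := mul_self_pos.2 (sub_ne_zero.2 hx)
      nlinarith
  have hdd : (derivative (derivative ((X - C a) * ((X - C a) * r)))).eval a = 2 * r.eval a := by
    simp [derivative_mul]
    ring
  rw [hdd]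
  positivity

end Polynomial

section Infinitesimal

variable {R : Type*} [Field R] [LinearOrder R] [IsStrictOrderedRing R]

lemma OrderRingHom.map_add_mul_nonneg_of_forall_lt (f : ℝ →+*o R) {ε : R} (hε : 0 ≤ ε)
    (hεinf : ∀ r : ℝ, 0 < r → ε < f r) {a b : ℝ} (ha : 0 ≤ a) (hb : a = 0 → 0 ≤ b) :
    0 ≤ f a + ε * f b := by
  rcases le_or_gt 0 b with hb0 | hb0
  · exact add_nonneg (map_nonneg f ha) (mul_nonneg hε (map_nonneg f hb0))
  · have ha0 : 0 < a := ha.lt_of_ne fun h => (hb h.symm).not_gt hb0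
    calc 0 = f a - f (a / -b) * f (-b) := by
            rw [← map_mul, div_mul_cancel₀ a (by linarith : -b ≠ 0), sub_self]
      _ ≤ f a - ε * f (-b) := by
            gcongr
            · exact map_nonneg f (by linarith)
            · exact (hεinf _ (div_pos ha0 (by linarith))).le
      _ = f a + ε * f b := by rw [map_neg]; ring

lemma psi_nonneg_of_forall_eval_nonneg (f : ℝ →+*o R) {ε : R} (hε : 0 ≤ ε)
    (hεinf : ∀ r : ℝ, 0 < r → ε < f r) {p : ℝ[X]} (hp : ∀ x, 0 ≤ p.eval x) :
    0 ≤ psi f ε p :=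
  f.map_add_mul_nonneg_of_forall_lt hε hεinf (hp 0)
    (eval_derivative_derivative_nonneg_of_eval_eq_zero hp)

lemma psi_one (f : ℝ →+*o R) (ε : R) : psi f ε 1 = 1 := by
  simp [psi]

lemma psi_one_add_X_sq (f : ℝ →+*o R) (ε : R) : psi f ε (1 + X ^ 2) = 1 + 2 * ε := by
  simp [psi]
  ring

lemma psi_one_add_X_sq_sq (f : ℝ →+*o R) (ε : R) :
    psi f ε ((1 + X ^ 2) ^ 2) = 1 + 4 * ε := by
  simp [psi, derivative_pow, map_ofNat]
  ring

end Infinitesimal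

theorem psi_positive_not_cauchy_schwarz_general
    {R : Type*} [Field R] [LinearOrder R] [IsStrictOrderedRing R] (f : ℝ →+*o R)
    (ε : R) (hε : 0 < ε) (hεinf : ∀ r : ℝ, 0 < r → ε < f r) :
    (∀ p : Polynomial ℝ, (∀ x : ℝ, 0 ≤ p.eval x) → 0 ≤ psi f ε p) ∧
    psi f ε (1 + X ^ 2) ^ 2 = 1 + 4 * ε + 4 * ε ^ 2 ∧
    psi f ε ((1 + X ^ 2) ^ 2) * psi f ε 1 = 1 + 4 * ε ∧
    psi f ε ((1 + X ^ 2) ^ 2) * psi f ε 1 < psi f ε (1 + X ^ 2) ^ 2 := by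
  rw [psi_one_add_X_sq, psi_one_add_X_sq_sq, psi_one]
  refine ⟨fun p hp => psi_nonneg_of_forall_eval_nonneg f hε.le hεinf hp, by ring, by ring, ?_⟩
  nlinarith [pow_pos hε 2]

/-- **A positive functional failing the Cauchy–Schwarz inequality.**  Let `R` be a real
closed extension field of `ℝ` containing an element `ε` with `0 < ε < r` for every real
`r > 0`.  The functional `ψ(p) = p(0) + ε·p''(0)` is nonnegative on all polynomials that are
pointwise nonnegative on `ℝ`, yet for `a = 1 + t²` one has
`ψ(a)² = 1 + 4ε + 4ε² > 1 + 4ε = ψ(a²)·ψ(1)`. -/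
theorem psi_positive_not_cauchy_schwarz
    {R : Type*} [Field R] [LinearOrder R] [IsStrictOrderedRing R] (f : ℝ →+*o R) (hR : IsRealClosed' R)
    (ε : R) (hε : 0 < ε) (hεinf : ∀ r : ℝ, 0 < r → ε < f r) :
    (∀ p : Polynomial ℝ, (∀ x : ℝ, 0 ≤ p.eval x) → 0 ≤ psi f ε p) ∧
    psi f ε (1 + X ^ 2) ^ 2 = 1 + 4 * ε + 4 * ε ^ 2 ∧
    psi f ε ((1 + X ^ 2) ^ 2) * psi f ε 1 = 1 + 4 * ε ∧
    psi f ε ((1 + X ^ 2) ^ 2) * psi f ε 1 < psi f ε (1 + X ^ 2) ^ 2 :=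
  psi_positive_not_cauchy_schwarz_general f ε hε hεinf
end

section
/- Let A be a ℂ-algebra with involution, R a real closed extension field of ℝ, and C = R[i]. Let φ : A → C be a ℂ-linear functional with φ(a*) = conj(φ(a)) for all a ∈ A. Equip the C-algebra C ⊗_ℂ A with the involution determined by (z ⊗ a)* := conj(z) ⊗ a*. Then φ is completely positive if and only if the C-linear extension id ⊗ φ : C ⊗_ℂ A → C (determined by z ⊗ a ↦ z·φ(a)) is positive, i.e. (id ⊗ φ)(x*x) ≥ 0 for every x ∈ C ⊗_ℂ A. -/
open Polynomial Matrix

noncomputable section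

set_option maxRecDepth 8000

/-- `Cplx R = R[i] = R[X]/(X² + 1)`. -/
abbrev Cplx (R : Type*) [CommRing R] : Type _ := AdjoinRoot (X ^ 2 + 1 : R[X])

namespace Cplx

variable (R : Type*) [CommRing R]

/-- The imaginary unit `i` of `R[i]`. -/
def I : Cplx R := AdjoinRoot.root _

theorem I_sq : (I R) ^ 2 = -1 := by
  have h : (I R) ^ 2 + 1 = 0 := by
    have h := AdjoinRoot.eval₂_root (X ^ 2 + 1 : R[X])
    simp only [eval₂_add, eval₂_pow, eval₂_X, eval₂_one] at h
    exact h
  exact eq_neg_of_add_eq_zero_left h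

variable {R}

/-- Conjugation on `R[i]`: the `R`-algebra involution determined by `i ↦ -i`. -/
def conj : Cplx R →+* Cplx R :=
  AdjoinRoot.lift (algebraMap R _) (-(I R)) (by
    have h : (I R) ^ 2 + 1 = 0 := by
      have h := AdjoinRoot.eval₂_root (X ^ 2 + 1 : R[X])
      simp only [eval₂_add, eval₂_pow, eval₂_X, eval₂_one] at h
      exact h
    simp only [eval₂_add, eval₂_pow, eval₂_X, eval₂_one]
    calc (-(I R)) ^ 2 + 1 = (I R) ^ 2 + 1 := by ring
    _ = 0 := h)

/-- `z ∈ R[i]` is *nonnegative* if it lies in `R` and is nonnegative there. -/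
def nonneg {R' : Type*} [Field R'] [LinearOrder R'] [IsStrictOrderedRing R'] (z : Cplx R') : Prop :=
  ∃ r : R', 0 ≤ r ∧ z = algebraMap R' (Cplx R') r

/-- `z ∈ R[i]` is *positive* if it lies in `R` and is positive there. -/
def pos {R' : Type*} [Field R'] [LinearOrder R'] [IsStrictOrderedRing R'] (z : Cplx R') : Prop :=
  ∃ r : R', 0 < r ∧ z = algebraMap R' (Cplx R') r

/-- The embedding `ℂ = ℝ[i] → R[i]` induced by an embedding `f : ℝ → R`,
`x + y·i ↦ f x + f y · i`. -/
def emb (f : ℝ →+* R) : ℂ →+* Cplx R where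
  toFun z := algebraMap R (Cplx R) (f z.re) + algebraMap R (Cplx R) (f z.im) * I R
  map_one' := by simp
  map_zero' := by simp
  map_add' z w := by
    simp only [Complex.add_re, Complex.add_im, map_add]
    ring
  map_mul' z w := by
    have hI : (I R) ^ 2 = -1 := I_sq R
    simp only [Complex.mul_re, Complex.mul_im, map_add, map_sub, _root_.map_mul]
    linear_combination (-(algebraMap R (Cplx R) (f z.im) * algebraMap R (Cplx R) (f w.im))) * hI

/-- A matrix with entries in `R[i]` is positive semidefinite if
`∑ⱼₖ conj(zⱼ)·zₖ·Mⱼₖ ≥ 0` for all vectors `z`. -/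
def PSD {R' : Type*} [Field R'] [LinearOrder R'] [IsStrictOrderedRing R'] {m : ℕ}
    (M : Matrix (Fin m) (Fin m) (Cplx R')) : Prop :=
  ∀ z : Fin m → Cplx R', Cplx.nonneg (∑ j, ∑ k, Cplx.conj (z j) * z k * M j k)

end Cplx

section StarAlgebra

variable {R : Type*} [Field R] [LinearOrder R] [IsStrictOrderedRing R]
variable {A : Type*} [NonUnitalRing A] [Module ℂ A] [StarRing A] [StarModule ℂ A]

/-- `φ : A → R[i]` is `ℂ`-linear (via the embedding `ℂ → R[i]` induced by `f`) and
compatible with the involutions: `φ(a*) = conj (φ a)`. -/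
def IsHermitianLinear (f : ℝ →+* R) (φ : A → Cplx R) : Prop :=
  (∀ a b : A, φ (a + b) = φ a + φ b) ∧
  (∀ (c : ℂ) (a : A), φ (c • a) = Cplx.emb f c * φ a) ∧
  (∀ a : A, φ (star a) = Cplx.conj (φ a))

/-- `φ : A → R[i]` is *completely positive* if for every `m` the entrywise map
`Mₘ(A) → Mₘ(R[i])` maps sums of hermitian squares to positive semidefinite matrices. -/
def CompletelyPositive (φ : A → Cplx R) : Prop :=
  ∀ (m n : ℕ) (B : Fin n → Matrix (Fin m) (Fin m) A),
    Cplx.PSD (fun j k => φ ((∑ l, (B l)ᴴ * B l) j k))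

/-- The set of sums of hermitian squares in a `*`-algebra. -/
def SumsOfSquares (A : Type*) [NonUnitalRing A] [Star A] : Set A :=
  {x | ∃ (n : ℕ) (a : Fin n → A), x = ∑ i, star (a i) * a i}

end StarAlgebra

universe u v

/-!
Forward: for a single matrix `B` whose only nonzero row is `a`, the entries of `Bᴴ B` are the
`aⱼ* aₖ`, so positive semidefiniteness of `φ⁽ᵐ⁾(Bᴴ B)` is positivity of the extension at
`∑ⱼ zⱼ ⊗ aⱼ`. Backward: by additivity of `φ`, the hermitian form of `φ⁽ᵐ⁾(∑ₗ Bₗᴴ Bₗ)` splits into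
a sum, over `l` and the rows `p` of `Bₗ`, of the forms `∑ⱼₖ conj(zⱼ)·zₖ·φ((Bₗ)ₚⱼ* (Bₗ)ₚₖ)`, each
nonnegative by hypothesis.
-/

namespace Cplx

variable (R : Type*) [Field R] [LinearOrder R] [IsStrictOrderedRing R]

def nonnegAddSubmonoid : AddSubmonoid (Cplx R) where
  carrier := {z | nonneg z}
  zero_mem' := ⟨0, le_rfl, (map_zero _).symm⟩
  add_mem' := by
    rintro _ _ ⟨r, hr, rfl⟩ ⟨s, hs, rfl⟩
    exact ⟨r + s, add_nonneg hr hs, (map_add _ r s).symm⟩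

variable {R}

theorem nonneg_sum {ι : Type*} (s : Finset ι) {g : ι → Cplx R} (h : ∀ i ∈ s, nonneg (g i)) :
    nonneg (∑ i ∈ s, g i) :=
  sum_mem (S := nonnegAddSubmonoid R) h

end Cplx

theorem Matrix.conjTranspose_mul_self_updateRow_zero_apply {α : Type*} [NonUnitalNonAssocSemiring α]
    [StarAddMonoid α] {m : Type*} [Fintype m] [DecidableEq m] (i : m) (a : m → α) (j k : m) :
    ((updateRow 0 i a)ᴴ * updateRow 0 i a) j k = star (a j) * a k := by
  rw [mul_apply, Finset.sum_eq_single i (fun p _ hp => by simp [hp]) (by simp)]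
  simp

theorem Cplx.sum_conj_mul_map_sum_conjTranspose_mul_self {R : Type*} [CommRing R]
    {A : Type*} [NonUnitalNonAssocSemiring A] [Star A] (φ : A →+ Cplx R) {m n : ℕ}
    (z : Fin m → Cplx R) (B : Fin n → Matrix (Fin m) (Fin m) A) :
    ∑ j, ∑ k, conj (z j) * z k * φ ((∑ l, (B l)ᴴ * B l) j k) =
      ∑ l, ∑ p, ∑ j, ∑ k, conj (z j) * z k * φ (star (B l p j) * B l p k) := by
  simp only [Matrix.sum_apply, mul_apply, conjTranspose_apply, map_sum, Finset.mul_sum]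
  rw [Finset.sum_comm_cycle]
  exact Finset.sum_congr rfl fun l _ => Finset.sum_comm_cycle

section CompletelyPositive

variable {R : Type*} [Field R] [LinearOrder R] [IsStrictOrderedRing R]
variable {A : Type*} [NonUnitalRing A] [StarRing A]

theorem CompletelyPositive.nonneg_sum_conj_mul_map_star_mul {φ : A → Cplx R}
    (hφ : CompletelyPositive φ) {m : ℕ} (z : Fin m → Cplx R) (a : Fin m → A) :
    Cplx.nonneg (∑ j, ∑ k, Cplx.conj (z j) * z k * φ (star (a j) * a k)) := by
  rcases m with _ | m
  · exact Cplx.nonneg_sum _ fun j _ => j.elim0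
  · simpa [conjTranspose_mul_self_updateRow_zero_apply] using
      hφ (m + 1) 1 (fun _ => updateRow 0 0 a) z

theorem completelyPositive_of_nonneg_sum_conj_mul_map_star_mul (φ : A →+ Cplx R)
    (h : ∀ (m : ℕ) (z : Fin m → Cplx R) (a : Fin m → A),
      Cplx.nonneg (∑ j, ∑ k, Cplx.conj (z j) * z k * φ (star (a j) * a k))) :
    CompletelyPositive φ := by
  intro m n B z
  rw [Cplx.sum_conj_mul_map_sum_conjTranspose_mul_self]
  exact Cplx.nonneg_sum _ fun l _ => Cplx.nonneg_sum _ fun p _ => h m z (B l p)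

end CompletelyPositive

theorem completelyPositive_iff_extension_positive_general
    {R : Type u} [Field R] [LinearOrder R] [IsStrictOrderedRing R] (f : ℝ →+*o R)
    {A : Type v} [NonUnitalRing A] [Module ℂ A]
    [StarRing A]
    (φ : A → Cplx R) (hφ : IsHermitianLinear f.toRingHom φ) :
    CompletelyPositive φ ↔
      ∀ (m : ℕ) (z : Fin m → Cplx R) (a : Fin m → A),
        Cplx.nonneg (∑ j, ∑ k, Cplx.conj (z j) * z k * φ (star (a j) * a k)) :=
  ⟨fun h _ => h.nonneg_sum_conj_mul_map_star_mul,
    completelyPositive_of_nonneg_sum_conj_mul_map_star_mul (AddMonoidHom.mk' φ hφ.1)⟩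

/-- **Complete positivity equals positivity of the extension to `C ⊗_ℂ A`.**
Let `A` be a `ℂ`-algebra with involution, `R` a real closed extension field of `ℝ` and
`C = R[i]`.  A `ℂ`-linear functional `φ : A → C` with `φ(a*) = conj (φ a)` is completely
positive if and only if the `C`-linear extension `id ⊗ φ : C ⊗_ℂ A → C`, `z ⊗ a ↦ z·φ(a)`,
is positive; i.e. (evaluating `(id ⊗ φ)(x* x)` at a generic element `x = ∑ⱼ zⱼ ⊗ aⱼ` of
`C ⊗_ℂ A`) if and only if `∑ⱼₖ conj(zⱼ)·zₖ·φ(aⱼ* aₖ) ≥ 0` for all `zⱼ ∈ C`, `aⱼ ∈ A`. -/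
theorem completelyPositive_iff_extension_positive
    {R : Type u} [Field R] [LinearOrder R] [IsStrictOrderedRing R] (f : ℝ →+*o R) (hR : IsRealClosed' R)
    {A : Type v} [NonUnitalRing A] [Module ℂ A] [SMulCommClass ℂ A A] [IsScalarTower ℂ A A]
    [StarRing A] [StarModule ℂ A]
    (φ : A → Cplx R) (hφ : IsHermitianLinear f.toRingHom φ) :
    CompletelyPositive φ ↔
      ∀ (m : ℕ) (z : Fin m → Cplx R) (a : Fin m → A),
        Cplx.nonneg (∑ j, ∑ k, Cplx.conj (z j) * z k * φ (star (a j) * a k)) :=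
  completelyPositive_iff_extension_positive_general f φ hφ
end
end

section
/- Let Γ be a group. Then for every a ∈ ℂ[Γ] one has ‖a‖₁²·1 − a*a ∈ Σ²ℂ[Γ]. -/
noncomputable section

universe u

variable (Γ : Type u) [Group Γ]

/-- The involution of the complex group algebra `ℂ[Γ]`:
`(∑ a_g·g)* = ∑ conj(a_g)·g⁻¹`. -/
def gstar (a : MonoidAlgebra ℂ Γ) : MonoidAlgebra ℂ Γ :=
  a.coeff.sum fun g c => MonoidAlgebra.single g⁻¹ (starRingEnd ℂ c)

/-- The `ℓ¹`-norm of an element of `ℂ[Γ]`: `‖∑ a_g·g‖₁ = ∑ |a_g|`. -/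
def l1norm (a : MonoidAlgebra ℂ Γ) : ℝ :=
  a.coeff.sum fun _ c => ‖c‖

/-- The set `Σ²ℂ[Γ]` of sums of hermitian squares in the group algebra. -/
def SOS : Set (MonoidAlgebra ℂ Γ) :=
  {x | ∃ (n : ℕ) (a : Fin n → MonoidAlgebra ℂ Γ), x = ∑ i, gstar Γ (a i) * a i}

/-- The hermitian elements `ℂ[Γ]^h = {a : a* = a}`. -/
def herm : Set (MonoidAlgebra ℂ Γ) := {a | gstar Γ a = a}

/-- The augmentation homomorphism `ε : ℂ[Γ] → ℂ`, `∑ a_g·g ↦ ∑ a_g`. -/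
def aug : MonoidAlgebra ℂ Γ →ₐ[ℂ] ℂ := MonoidAlgebra.lift ℂ ℂ Γ 1

/-- The augmentation ideal `ω(Γ) = ker ε`. -/
def omega : Set (MonoidAlgebra ℂ Γ) := {a | aug Γ a = 0}

/-- The hermitian part `ω(Γ)^h` of the augmentation ideal. -/
def omegaH : Set (MonoidAlgebra ℂ Γ) := {a | a ∈ omega Γ ∧ gstar Γ a = a}

/-- `Σ²ω(Γ)`: sums of hermitian squares of elements of the augmentation ideal. -/
def SOSomega : Set (MonoidAlgebra ℂ Γ) :=
  {x | ∃ (n : ℕ) (a : Fin n → MonoidAlgebra ℂ Γ),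
    (∀ i, a i ∈ omega Γ) ∧ x = ∑ i, gstar Γ (a i) * a i}

/-- `ω²(Γ)`, the `ℂ`-span of products of two elements of the augmentation ideal. -/
def omegaSq : Set (MonoidAlgebra ℂ Γ) :=
  (Submodule.span ℂ {x : MonoidAlgebra ℂ Γ |
    ∃ a ∈ omega Γ, ∃ b ∈ omega Γ, x = a * b} : Submodule ℂ (MonoidAlgebra ℂ Γ))

/-- `c(g) = g - 1 ∈ ω(Γ)`. -/
def cE (g : Γ) : MonoidAlgebra ℂ Γ := MonoidAlgebra.of ℂ Γ g - 1

/-- The Laplace operator `Δ(S) = |S| - ∑_{s ∈ S} s` of a finite subset `S ⊆ Γ`. -/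
def Delta (S : Finset Γ) : MonoidAlgebra ℂ Γ :=
  (S.card : MonoidAlgebra ℂ Γ) - ∑ s ∈ S, MonoidAlgebra.of ℂ Γ s


/-! Write `a = ∑ |a_g| u_g g` with phases `|u_g| = 1`. Expanding hermitian squares gives
`(u_g g - u_h h)*(u_g g - u_h h) = 2 - conj(u_g) u_h g⁻¹h - conj(u_h) u_g h⁻¹g`, hence
`‖a‖₁² - a*a = ½ ∑_{g,h} |a_g| |a_h| (u_g g - u_h h)*(u_g g - u_h h)`. -/

open MonoidAlgebra Finset

lemma gstar_single (g : Γ) (c : ℂ) : gstar Γ (single g c) = single g⁻¹ (starRingEnd ℂ c) :=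
  Finsupp.sum_single_index (by simp)

lemma gstar_sub (x y : MonoidAlgebra ℂ Γ) : gstar Γ (x - y) = gstar Γ x - gstar Γ y :=
  Finsupp.sum_sub_index fun _ _ _ => by simp

lemma gstar_smul (c : ℂ) (x : MonoidAlgebra ℂ Γ) :
    gstar Γ (c • x) = starRingEnd ℂ c • gstar Γ x := by
  rw [gstar, gstar, coeff_smul, Finsupp.sum_smul_index' fun _ => by simp, Finsupp.smul_sum]
  simp [smul_single]

lemma gstar_mul_eq_sum (a b : MonoidAlgebra ℂ Γ) :
    gstar Γ a * b = ∑ g ∈ a.coeff.support, ∑ h ∈ b.coeff.support,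
      single (g⁻¹ * h) (starRingEnd ℂ (a.coeff g) * b.coeff h) := by
  conv_lhs => rw [← sum_coeff_single b]
  simp only [gstar, Finsupp.sum, sum_mul_sum, single_mul_single]

lemma gstar_mul_self_mem_SOS (x : MonoidAlgebra ℂ Γ) : gstar Γ x * x ∈ SOS Γ :=
  ⟨1, fun _ => x, by simp⟩

lemma zero_mem_SOS : (0 : MonoidAlgebra ℂ Γ) ∈ SOS Γ :=
  ⟨0, Fin.elim0, by simp⟩

lemma add_mem_SOS {x y : MonoidAlgebra ℂ Γ} (hx : x ∈ SOS Γ) (hy : y ∈ SOS Γ) :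
    x + y ∈ SOS Γ := by
  obtain ⟨m, a, rfl⟩ := hx
  obtain ⟨n, b, rfl⟩ := hy
  exact ⟨m + n, Fin.append a b, by simp [Fin.sum_univ_add]⟩

lemma sum_mem_SOS {ι : Type*} {s : Finset ι} {f : ι → MonoidAlgebra ℂ Γ}
    (hf : ∀ i ∈ s, f i ∈ SOS Γ) : ∑ i ∈ s, f i ∈ SOS Γ :=
  Finset.sum_induction f (· ∈ SOS Γ) (fun _ _ => add_mem_SOS Γ) (zero_mem_SOS Γ) hf

lemma ofReal_smul_mem_SOS {r : ℝ} (hr : 0 ≤ r) {x : MonoidAlgebra ℂ Γ} (hx : x ∈ SOS Γ) :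
    (r : ℂ) • x ∈ SOS Γ := by
  obtain ⟨n, a, rfl⟩ := hx
  refine ⟨n, fun i => (Real.sqrt r : ℂ) • a i, ?_⟩
  simp only [gstar_smul, Complex.conj_ofReal, smul_mul_smul, ← Complex.ofReal_mul,
    Real.mul_self_sqrt hr, Finset.smul_sum]

lemma gstar_single_sub_single_mul_self (g h : Γ) (u w : ℂ) :
    gstar Γ (single g u - single h w) * (single g u - single h w) =
      ((‖u‖ ^ 2 + ‖w‖ ^ 2 : ℝ) : ℂ) • 1 - single (g⁻¹ * h) (starRingEnd ℂ u * w)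
        - single (h⁻¹ * g) (starRingEnd ℂ w * u) := by
  simp only [gstar_sub, gstar_single, sub_mul, mul_sub, single_mul_single, inv_mul_cancel,
    Complex.conj_mul', one_def, smul_single, smul_eq_mul, mul_one, Complex.ofReal_add,
    Complex.ofReal_pow, single_add]
  abel

-- The theorem for `a = c g + d h` with `g ≠ h`.
lemma two_term_mem_SOS (g h : Γ) (c d : ℂ) :
    ((2 * ‖c‖ * ‖d‖ : ℝ) : ℂ) • 1 - single (g⁻¹ * h) (starRingEnd ℂ c * d)
      - single (h⁻¹ * g) (starRingEnd ℂ d * c) ∈ SOS Γ := by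
  obtain ⟨u, hu, hc⟩ : ∃ u : ℂ, ‖u‖ = 1 ∧ c = ‖c‖ * u :=
    ⟨_, Complex.norm_exp_ofReal_mul_I _, (Complex.norm_mul_exp_arg_mul_I c).symm⟩
  obtain ⟨w, hw, hd⟩ : ∃ w : ℂ, ‖w‖ = 1 ∧ d = ‖d‖ * w :=
    ⟨_, Complex.norm_exp_ofReal_mul_I _, (Complex.norm_mul_exp_arg_mul_I d).symm⟩
  have hsquare := ofReal_smul_mem_SOS Γ (by positivity : 0 ≤ ‖c‖ * ‖d‖)
    (gstar_mul_self_mem_SOS Γ (single g u - single h w))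
  rw [gstar_single_sub_single_mul_self, hu, hw, smul_sub, smul_sub, smul_smul, smul_single,
    smul_single] at hsquare
  convert hsquare using 3
  · congr 1
    push_cast
    ring
  · congr 1
    conv_lhs => rw [hc, hd]
    simp only [map_mul, Complex.conj_ofReal, Complex.ofReal_mul, smul_eq_mul]
    ring
  · conv_lhs => rw [hc, hd]
    simp only [map_mul, Complex.conj_ofReal, Complex.ofReal_mul, smul_eq_mul]
    ring

lemma l1norm_sq_smul_one_sub_gstar_mul_self_eq_sum (a : MonoidAlgebra ℂ Γ) :
    ((l1norm Γ a ^ 2 : ℝ) : ℂ) • (1 : MonoidAlgebra ℂ Γ) - gstar Γ a * a =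
      ((1 / 2 : ℝ) : ℂ) • ∑ g ∈ a.coeff.support, ∑ h ∈ a.coeff.support,
        (((2 * ‖a.coeff g‖ * ‖a.coeff h‖ : ℝ) : ℂ) • 1
          - single (g⁻¹ * h) (starRingEnd ℂ (a.coeff g) * a.coeff h)
          - single (h⁻¹ * g) (starRingEnd ℂ (a.coeff h) * a.coeff g)) := by
  have hl1 : l1norm Γ a ^ 2 =
      ∑ g ∈ a.coeff.support, ∑ h ∈ a.coeff.support, ‖a.coeff g‖ * ‖a.coeff h‖ := by
    rw [l1norm, Finsupp.sum, sq, sum_mul_sum]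
  have hswap : ∑ g ∈ a.coeff.support, ∑ h ∈ a.coeff.support,
      single (h⁻¹ * g) (starRingEnd ℂ (a.coeff h) * a.coeff g) = gstar Γ a * a := by
    rw [sum_comm, gstar_mul_eq_sum]
  simp only [sum_sub_distrib, hswap, ← gstar_mul_eq_sum, ← sum_smul, hl1,
    mul_assoc, ← mul_sum, Complex.ofReal_sum, Complex.ofReal_mul]
  push_cast
  module

/-- For every group `Γ` and every `a ∈ ℂ[Γ]` one has `‖a‖₁² - a*a ∈ Σ²ℂ[Γ]`. -/
theorem l1norm_sq_sub_star_mul_mem_SOS (a : MonoidAlgebra ℂ Γ) :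
    ((l1norm Γ a ^ 2 : ℝ) : ℂ) • (1 : MonoidAlgebra ℂ Γ) - gstar Γ a * a ∈ SOS Γ := by
  rw [l1norm_sq_smul_one_sub_gstar_mul_self_eq_sum]
  exact ofReal_smul_mem_SOS Γ (by norm_num)
    (sum_mem_SOS Γ fun g _ => sum_mem_SOS Γ fun h _ => two_term_mem_SOS Γ g h _ _)
end
end

section
/- For every group Γ one has Σ²ω(Γ) = Σ²ℂ[Γ] ∩ ω(Γ). -/
noncomputable section

universe u

variable (Γ : Type u) [Group Γ]

/-!
The augmentation `ε` intertwines `*` with complex conjugation, so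
`ε(∑ aᵢ* aᵢ) = ∑ |ε(aᵢ)|²`, which vanishes exactly when every `ε(aᵢ)` does.
-/

lemma mem_omega_iff {a : MonoidAlgebra ℂ Γ} : a ∈ omega Γ ↔ aug Γ a = 0 := Iff.rfl

lemma aug_single (g : Γ) (c : ℂ) : aug Γ (MonoidAlgebra.single g c) = c := by
  simp [aug, MonoidAlgebra.lift_single]

lemma aug_eq_sum (a : MonoidAlgebra ℂ Γ) : aug Γ a = a.coeff.sum fun _ c => c := by
  conv_lhs => rw [← MonoidAlgebra.sum_coeff_single a]
  simp only [map_finsuppSum, aug_single]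

lemma aug_gstar (a : MonoidAlgebra ℂ Γ) : aug Γ (gstar Γ a) = starRingEnd ℂ (aug Γ a) := by
  rw [gstar, map_finsuppSum, aug_eq_sum, map_finsuppSum]
  simp only [aug_single]

open ComplexOrder in
lemma Complex.sum_conj_mul_self_eq_zero_iff {ι : Type*} (s : Finset ι) (f : ι → ℂ) :
    ∑ i ∈ s, starRingEnd ℂ (f i) * f i = 0 ↔ ∀ i ∈ s, f i = 0 := by
  simp only [starRingEnd_apply]
  rw [Finset.sum_eq_zero_iff_of_nonneg fun i _ => star_mul_self_nonneg (f i)]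
  simp only [CStarRing.star_mul_self_eq_zero_iff]

lemma sum_gstar_mul_self_mem_omega_iff {n : ℕ} (a : Fin n → MonoidAlgebra ℂ Γ) :
    ∑ i, gstar Γ (a i) * a i ∈ omega Γ ↔ ∀ i, a i ∈ omega Γ := by
  simp only [mem_omega_iff, map_sum, map_mul, aug_gstar,
    Complex.sum_conj_mul_self_eq_zero_iff, Finset.mem_univ, true_imp_iff]

/-- For any group `Γ`, `Σ²ω(Γ) = Σ²ℂ[Γ] ∩ ω(Γ)`. -/
theorem SOSomega_eq_SOS_inter_omega : SOSomega Γ = SOS Γ ∩ omega Γ := by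
  ext x
  constructor
  · rintro ⟨n, a, ha, rfl⟩
    exact ⟨⟨n, a, rfl⟩, (sum_gstar_mul_self_mem_omega_iff Γ a).2 ha⟩
  · rintro ⟨⟨n, a, rfl⟩, hx⟩
    exact ⟨n, a, (sum_gstar_mul_self_mem_omega_iff Γ a).1 hx, rfl⟩
end
end
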